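/- arXiv:1606.04665 — 3 statements merged into one kernel-verified Lean document; each statement's English description precedes it below -/
import Mathlib

section
/- For each r > 0 and each input p in W^{1,1}(0,T), there exists a unique solution ξ_r in W^{1,1}(0,T) of the play variational inequality: |p(t) − ξ_r(t)| ≤ r for all t in [0,T], (ξ_r)'(t)(p(t) − ξ_r(t) − z) ≥ 0 for a.e. t and all z in [−r,r], with initial condition p(0) − ξ_r(0) = max{−r, min{p(0), r}}. -/
/-!
The play output is given by an explicit formula (`playFormula`): `ξ t` is the largest of the
floors propagated from the initial value and from the constraint `ξ s ≥ p s - r` at earlier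
times `s`. From the formula, `ξ` never moves more than `p` on an interval, so
`|ξ t - ξ s| ≤ ∫ₛᵗ |p'|` and `ξ` is absolutely continuous; and `ξ` is nonincreasing just after
any time where `p - ξ < r` and nondecreasing just after any time where `p - ξ > -r`, which gives
the sign of `ξ'` demanded by the variational inequality.

For uniqueness, testing the inequality of each solution with `z` taken from the other gives
`(ξ - η) (ξ' - η') ≤ 0`, so `(ξ - η)²`, which vanishes at `0`, is nonincreasing.
-/

open MeasureTheory Set

/-- `IsPlay T r p ξ ξ'` says that `ξ ∈ W^{1,1}(0,T)` (with a.e. derivative `ξ'`) solves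
the play variational inequality with input `p` and memory parameter `r`:
`|p(t) − ξ(t)| ≤ r` on `[0,T]`, `ξ'(t)(p(t) − ξ(t) − z) ≥ 0` for a.e. `t` and all
`z ∈ [−r,r]`, and `p(0) − ξ(0) = max{−r, min{p(0), r}}`. -/
def IsPlay (T r : ℝ) (p ξ ξ' : ℝ → ℝ) : Prop :=
  IntervalIntegrable ξ' volume 0 T ∧
  (∀ t ∈ Set.Icc 0 T, ξ t = ξ 0 + ∫ s in (0:ℝ)..t, ξ' s) ∧
  (∀ t ∈ Set.Icc 0 T, |p t - ξ t| ≤ r) ∧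
  (∀ᵐ t ∂(volume.restrict (Set.Icc 0 T)),
      ∀ z ∈ Set.Icc (-r) r, 0 ≤ ξ' t * (p t - ξ t - z)) ∧
  p 0 - ξ 0 = max (-r) (min (p 0) r)

open Filter Topology

lemma AbsolutelyContinuousOnInterval.of_dist_le {X Y : Type*} [PseudoMetricSpace X]
    [PseudoMetricSpace Y] {f : ℝ → X} {g : ℝ → Y} {a b : ℝ}
    (hg : AbsolutelyContinuousOnInterval g a b)
    (h : ∀ x ∈ uIcc a b, ∀ y ∈ uIcc a b, dist (f x) (f y) ≤ dist (g x) (g y)) :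
    AbsolutelyContinuousOnInterval f a b := by
  refine tendsto_of_tendsto_of_tendsto_of_le_of_le' tendsto_const_nhds hg
    (Eventually.of_forall fun _ => Finset.sum_nonneg fun _ _ => dist_nonneg) ?_
  filter_upwards [mem_inf_of_right (mem_principal_self _)] with E hE
  exact Finset.sum_le_sum fun i hi => h _ (hE.1 i hi).1 _ (hE.1 i hi).2

lemma absolutelyContinuousOnInterval_of_abs_sub_le_integral {f m : ℝ → ℝ} {a b : ℝ}
    (hab : a ≤ b) (hm : IntervalIntegrable m volume a b)
    (h : ∀ x y, a ≤ x → x ≤ y → y ≤ b → |f y - f x| ≤ ∫ u in x..y, m u) :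
    AbsolutelyContinuousOnInterval f a b := by
  have hint : ∀ x ∈ uIcc a b, IntervalIntegrable m volume a x := fun x hx =>
    hm.mono_set (uIcc_subset_uIcc left_mem_uIcc hx)
  have hdist : ∀ x ∈ uIcc a b, ∀ y ∈ uIcc a b, x ≤ y →
      |f y - f x| ≤ |(∫ u in a..y, m u) - ∫ u in a..x, m u| := by
    intro x hx y hy hxy
    rw [intervalIntegral.integral_interval_sub_left (hint y hy) (hint x hx)]
    rw [uIcc_of_le hab] at hx hy
    exact (h x y hx.1 hxy hy.2).trans (le_abs_self _)
  refine (hm.absolutelyContinuousOnInterval_intervalIntegral left_mem_uIcc).of_dist_le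
    fun x hx y hy => ?_
  rcases le_total x y with hxy | hyx
  · simpa only [dist_comm _ (f y), dist_comm _ (∫ u in a..y, m u), Real.dist_eq] using
      hdist x hx y hy hxy
  · simpa only [Real.dist_eq] using hdist y hy x hx hyx

theorem intervalIntegral.sq_integral_eq_two_mul_integral {g : ℝ → ℝ} {a b : ℝ}
    (hg : IntervalIntegrable g volume a b) :
    (∫ x in a..b, g x) ^ 2 = 2 * ∫ x in a..b, g x * ∫ y in a..x, g y := by
  set G : ℝ → ℝ := fun x => ∫ y in a..x, g y
  have hG : AbsolutelyContinuousOnInterval G a b :=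
    hg.absolutelyContinuousOnInterval_intervalIntegral left_mem_uIcc
  have key := hG.integral_deriv_mul_eq_sub hG
  rw [← intervalIntegral.integral_const_mul]
  simp only [G, intervalIntegral.integral_same, mul_zero, sub_zero] at key
  rw [sq, ← key]
  refine intervalIntegral.integral_congr_ae ?_
  filter_upwards [hg.ae_hasDerivAt_integral] with x hx hxab
  rw [(hx (uIoc_subset_uIcc hxab) a left_mem_uIcc).deriv]
  ring

theorem HasDerivAt.nonpos_of_eventually_le_right {f : ℝ → ℝ} {f' t : ℝ}
    (hf : HasDerivAt f f' t) (h : ∀ᶠ u in 𝓝[>] t, f u ≤ f t) : f' ≤ 0 := by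
  refine le_of_tendsto (hasDerivAt_iff_tendsto_slope_left_right.1 hf).2 ?_
  filter_upwards [h, self_mem_nhdsWithin] with u hu htu
  rw [slope_def_field]
  exact div_nonpos_of_nonpos_of_nonneg (sub_nonpos.2 hu) (sub_nonneg.2 (le_of_lt htu))

theorem HasDerivAt.nonneg_of_eventually_ge_right {f : ℝ → ℝ} {f' t : ℝ}
    (hf : HasDerivAt f f' t) (h : ∀ᶠ u in 𝓝[>] t, f t ≤ f u) : 0 ≤ f' := by
  refine ge_of_tendsto (hasDerivAt_iff_tendsto_slope_left_right.1 hf).2 ?_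
  filter_upwards [h, self_mem_nhdsWithin] with u hu htu
  rw [slope_def_field]
  exact div_nonneg (sub_nonneg.2 hu) (sub_nonneg.2 (le_of_lt htu))

lemma Filter.Eventually.nhdsGT_forall_Icc {P : ℝ → Prop} {t : ℝ} (h : ∀ᶠ v in 𝓝[≥] t, P v) :
    ∀ᶠ u in 𝓝[>] t, ∀ v ∈ Icc t u, P v :=
  ((tendsto_const_nhdsWithin self_mem_Ici).Icc
    (tendsto_id'.2 (nhdsWithin_mono _ Ioi_subset_Ici_self))).eventually
    (eventually_smallSets_forall.2 h)

lemma abs_sub_le_integral_abs_of_eq_integral {p p' : ℝ → ℝ} {T x u y : ℝ}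
    (hp' : IntervalIntegrable p' volume 0 T)
    (hp : ∀ t ∈ Icc 0 T, p t = p 0 + ∫ s in (0:ℝ)..t, p' s)
    (hx : 0 ≤ x) (hxu : x ≤ u) (huy : u ≤ y) (hy : y ≤ T) :
    |p u - p x| ≤ ∫ v in x..y, |p' v| := by
  have hint : ∀ a b, 0 ≤ a → a ≤ b → b ≤ T → IntervalIntegrable p' volume a b :=
    fun a b ha hab hb => hp'.mono_set (uIcc_subset_uIcc (mem_uIcc_of_le ha (hab.trans hb))
      (mem_uIcc_of_le (ha.trans hab) hb))
  have huT : u ≤ T := huy.trans hy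
  have hxT : x ≤ T := hxu.trans huT
  rw [hp u ⟨hx.trans hxu, huT⟩, hp x ⟨hx, hxT⟩, add_sub_add_left_eq_sub,
    intervalIntegral.integral_interval_sub_left (hint 0 u le_rfl (hx.trans hxu) huT)
      (hint 0 x le_rfl hx hxT)]
  calc |∫ v in x..u, p' v| ≤ ∫ v in x..u, |p' v| :=
        intervalIntegral.abs_integral_le_integral_abs hxu
    _ ≤ ∫ v in x..y, |p' v| :=
        intervalIntegral.integral_mono_interval le_rfl hxu huy
          (Eventually.of_forall fun _ => abs_nonneg _) (hint x y hx (hxu.trans huy) hy).abs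

noncomputable def infIcc (p : ℝ → ℝ) (s t : ℝ) : ℝ := sInf (p '' Icc s t)

-- the floor `a` set at time `s`, as lowered up to time `t` by the constraint `ξ ≤ p + r`
noncomputable def playFloor (r : ℝ) (p : ℝ → ℝ) (a s t : ℝ) : ℝ := min a (infIcc p s t + r)

noncomputable def playFormula (r : ℝ) (p : ℝ → ℝ) (x₀ t : ℝ) : ℝ :=
  max (playFloor r p x₀ 0 t) (sSup ((fun s => playFloor r p (p s - r) s t) '' Icc 0 t))

section PlayFormula

variable {r T s t u a c : ℝ} {p : ℝ → ℝ} {x₀ : ℝ}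

lemma infIcc_self (p : ℝ → ℝ) (t : ℝ) : infIcc p t t = p t := by
  simp [infIcc]

lemma infIcc_le (hpb : Bornology.IsBounded (p '' Icc 0 T)) (hs : 0 ≤ s) (ht : t ≤ T)
    (hu : u ∈ Icc s t) : infIcc p s t ≤ p u :=
  csInf_le (hpb.subset (image_mono (Icc_subset_Icc hs ht))).bddBelow (mem_image_of_mem p hu)

lemma le_infIcc (hst : s ≤ t) (h : ∀ u ∈ Icc s t, c ≤ p u) : c ≤ infIcc p s t :=
  le_csInf ((nonempty_Icc.2 hst).image p) (forall_mem_image.2 h)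

lemma infIcc_eq_min (hpb : Bornology.IsBounded (p '' Icc 0 T)) (hs : 0 ≤ s) (hsu : s ≤ u)
    (hut : u ≤ t) (ht : t ≤ T) : infIcc p s t = min (infIcc p s u) (infIcc p u t) := by
  rw [infIcc, ← Icc_union_Icc_eq_Icc hsu hut, image_union]
  exact csInf_union (hpb.subset (image_mono (Icc_subset_Icc hs (hut.trans ht)))).bddBelow
    ((nonempty_Icc.2 hsu).image p)
    (hpb.subset (image_mono (Icc_subset_Icc (hs.trans hsu) ht))).bddBelow
    ((nonempty_Icc.2 hut).image p)

lemma playFloor_eq_min (hpb : Bornology.IsBounded (p '' Icc 0 T)) (hu : 0 ≤ u) (hus : u ≤ s)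
    (hst : s ≤ t) (ht : t ≤ T) :
    playFloor r p a u t = min (playFloor r p a u s) (infIcc p s t + r) := by
  rw [playFloor, playFloor, infIcc_eq_min hpb hu hus hst ht, ← min_add_add_right, min_assoc]

lemma playFloor_le_playFormula (hpb : Bornology.IsBounded (p '' Icc 0 T)) (ht : t ≤ T)
    (hs : s ∈ Icc 0 t) : playFloor r p (p s - r) s t ≤ playFormula r p x₀ t := by
  obtain ⟨C, hC⟩ := (hpb.subset (image_mono (Icc_subset_Icc le_rfl ht))).bddAbove
  refine le_max_of_le_right (le_csSup ⟨C - r, forall_mem_image.2 fun v hv => ?_⟩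
    (mem_image_of_mem _ hs))
  exact (min_le_left _ _).trans (by linarith [hC (mem_image_of_mem p hv)])

lemma playFormula_le (ht : 0 ≤ t) (h₀ : playFloor r p x₀ 0 t ≤ c)
    (h : ∀ s ∈ Icc 0 t, playFloor r p (p s - r) s t ≤ c) : playFormula r p x₀ t ≤ c :=
  max_le h₀ (csSup_le ((nonempty_Icc.2 ht).image _) (forall_mem_image.2 h))

lemma sub_le_playFormula (hpb : Bornology.IsBounded (p '' Icc 0 T)) (hr : 0 ≤ r)
    (ht : t ∈ Icc 0 T) : p t - r ≤ playFormula r p x₀ t := by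
  have h := playFloor_le_playFormula (r := r) (x₀ := x₀) hpb ht.2 (right_mem_Icc.2 ht.1)
  rwa [playFloor, infIcc_self, min_eq_left (by linarith)] at h

lemma playFormula_le_add (hpb : Bornology.IsBounded (p '' Icc 0 T)) (ht : t ∈ Icc 0 T) :
    playFormula r p x₀ t ≤ p t + r := by
  have hfloor : ∀ a s, s ∈ Icc 0 t → playFloor r p a s t ≤ p t + r := fun a s hs =>
    (min_le_right _ _).trans
      (by linarith [infIcc_le hpb hs.1 ht.2 (right_mem_Icc.2 hs.2)])
  exact playFormula_le ht.1 (hfloor _ _ (left_mem_Icc.2 ht.1)) fun s hs => hfloor _ _ hs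

lemma playFormula_zero (h₁ : p 0 - r ≤ x₀) (h₂ : x₀ ≤ p 0 + r) : playFormula r p x₀ 0 = x₀ := by
  simp only [playFormula, playFloor, Icc_self, image_singleton, csSup_singleton, infIcc_self]
  rw [min_eq_left h₂, min_eq_left (by linarith), max_eq_left h₁]

lemma playFormula_le_max (hpb : Bornology.IsBounded (p '' Icc 0 T)) (hs : 0 ≤ s) (hst : s ≤ t)
    (ht : t ≤ T) (hc : ∀ u ∈ Icc s t, p u - r ≤ c) :
    playFormula r p x₀ t ≤ max (playFormula r p x₀ s) c := by
  refine playFormula_le (hs.trans hst) ?_ fun u hu => ?_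
  · rw [playFloor_eq_min hpb le_rfl hs hst ht]
    exact le_max_of_le_left ((min_le_left _ _).trans (le_max_left _ _))
  rcases le_total u s with hus | hsu
  · rw [playFloor_eq_min hpb hu.1 hus hst ht]
    exact le_max_of_le_left ((min_le_left _ _).trans
      (playFloor_le_playFormula hpb (hst.trans ht) ⟨hu.1, hus⟩))
  · exact le_max_of_le_right ((min_le_left _ _).trans (hc u ⟨hsu, hu.2⟩))

lemma min_le_playFormula (hpb : Bornology.IsBounded (p '' Icc 0 T)) (hs : 0 ≤ s) (hst : s ≤ t)
    (ht : t ≤ T) (hc : ∀ u ∈ Icc s t, c ≤ p u + r) :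
    min (playFormula r p x₀ s) c ≤ playFormula r p x₀ t := by
  rcases le_or_gt c (playFormula r p x₀ t) with hle | hlt
  · exact (min_le_right _ _).trans hle
  have hc' : c ≤ infIcc p s t + r := by
    linarith [le_infIcc hst fun u hu => show c - r ≤ p u by linarith [hc u hu]]
  -- the floor at time `t` is the floor at time `s` capped by `infIcc p s t + r ≥ c > ξ t`
  have lower : ∀ a u, u ∈ Icc 0 s → playFloor r p a u t ≤ playFormula r p x₀ t →
      playFloor r p a u s ≤ playFormula r p x₀ t := fun a u hu h =>
    (min_le_iff.1 (playFloor_eq_min hpb hu.1 hu.2 hst ht ▸ h)).resolve_right (by linarith)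
  refine (min_le_left _ _).trans (playFormula_le hs ?_ fun u hu => ?_)
  · exact lower _ _ (left_mem_Icc.2 hs) (le_max_left _ _)
  · exact lower _ _ hu (playFloor_le_playFormula hpb ht ⟨hu.1, hu.2.trans hst⟩)

lemma abs_playFormula_sub_le (hpb : Bornology.IsBounded (p '' Icc 0 T)) (hr : 0 ≤ r)
    (hs : 0 ≤ s) (hst : s ≤ t) (ht : t ≤ T) {V : ℝ} (hV : ∀ u ∈ Icc s t, |p u - p s| ≤ V) :
    |playFormula r p x₀ t - playFormula r p x₀ s| ≤ V := by
  have hsT : s ∈ Icc 0 T := ⟨hs, hst.trans ht⟩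
  have hV₀ : 0 ≤ V := (abs_nonneg _).trans (hV s (left_mem_Icc.2 hst))
  have hlow := sub_le_playFormula (x₀ := x₀) hpb hr hsT
  have hhigh := playFormula_le_add (r := r) (x₀ := x₀) hpb hsT
  have hup := playFormula_le_max (r := r) (x₀ := x₀) (c := playFormula r p x₀ s + V) hpb hs hst ht
    fun u hu => by linarith [(abs_le.1 (hV u hu)).2]
  have hdown := min_le_playFormula (r := r) (x₀ := x₀) (c := playFormula r p x₀ s - V) hpb hs hst ht
    fun u hu => by linarith [(abs_le.1 (hV u hu)).1]
  rw [max_eq_right (by linarith)] at hup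
  rw [min_eq_right (by linarith)] at hdown
  exact abs_sub_le_iff.2 ⟨by linarith, by linarith⟩

lemma eventually_playFormula_le (hpb : Bornology.IsBounded (p '' Icc 0 T)) (ht : t ∈ Ico 0 T)
    (hpc : ContinuousWithinAt p (Ici t) t) (hlt : p t - r < playFormula r p x₀ t) :
    ∀ᶠ u in 𝓝[>] t, playFormula r p x₀ u ≤ playFormula r p x₀ t := by
  have hnear : ∀ᶠ u in 𝓝[>] t, ∀ v ∈ Icc t u, p v < playFormula r p x₀ t + r :=
    (hpc.eventually (gt_mem_nhds (by linarith))).nhdsGT_forall_Icc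
  filter_upwards [hnear, Ioo_mem_nhdsGT ht.2] with u hu hut
  have h := playFormula_le_max (r := r) (x₀ := x₀) (c := playFormula r p x₀ t) hpb ht.1
    hut.1.le hut.2.le fun v hv => by linarith [hu v hv]
  rwa [max_self] at h

lemma eventually_le_playFormula (hpb : Bornology.IsBounded (p '' Icc 0 T)) (ht : t ∈ Ico 0 T)
    (hpc : ContinuousWithinAt p (Ici t) t) (hlt : playFormula r p x₀ t < p t + r) :
    ∀ᶠ u in 𝓝[>] t, playFormula r p x₀ t ≤ playFormula r p x₀ u := by
  have hnear : ∀ᶠ u in 𝓝[>] t, ∀ v ∈ Icc t u, playFormula r p x₀ t - r < p v :=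
    (hpc.eventually (lt_mem_nhds (by linarith))).nhdsGT_forall_Icc
  filter_upwards [hnear, Ioo_mem_nhdsGT ht.2] with u hu hut
  have h := min_le_playFormula (r := r) (x₀ := x₀) (c := playFormula r p x₀ t) hpb ht.1
    hut.1.le hut.2.le fun v hv => by linarith [hu v hv]
  rwa [min_self] at h

end PlayFormula

lemma mul_sub_nonneg_of_sign {d w r z : ℝ} (hz : z ∈ Icc (-r) r) (h₁ : w < r → d ≤ 0)
    (h₂ : -r < w → 0 ≤ d) : 0 ≤ d * (w - z) := by
  rcases lt_trichotomy d 0 with hd | rfl | hd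
  · have hw : w ≤ -r := not_lt.1 fun h => (h₂ h).not_gt hd
    exact mul_nonneg_of_nonpos_of_nonpos hd.le (by linarith [hz.1])
  · simp
  · have hw : r ≤ w := not_lt.1 fun h => (h₁ h).not_gt hd
    exact mul_nonneg hd.le (by linarith [hz.2])

theorem isPlay_playFormula {T r : ℝ} {p p' : ℝ → ℝ} (hT : 0 ≤ T) (hr : 0 ≤ r)
    (hp' : IntervalIntegrable p' volume 0 T)
    (hp : ∀ t ∈ Icc 0 T, p t = p 0 + ∫ s in (0:ℝ)..t, p' s) :
    IsPlay T r p (playFormula r p (p 0 - max (-r) (min (p 0) r)))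
      (deriv (playFormula r p (p 0 - max (-r) (min (p 0) r)))) := by
  set x₀ := p 0 - max (-r) (min (p 0) r)
  set ξ := playFormula r p x₀
  have hpc : ContinuousOn p (Icc 0 T) := by
    simpa only [uIcc_of_le hT] using (absolutelyContinuousOnInterval_of_abs_sub_le_integral hT
      hp'.abs fun x y hx hxy hy =>
        abs_sub_le_integral_abs_of_eq_integral hp' hp hx hxy le_rfl hy).continuousOn
  have hpb : Bornology.IsBounded (p '' Icc 0 T) :=
    (isCompact_Icc.image_of_continuousOn hpc).isBounded
  have hξ : AbsolutelyContinuousOnInterval ξ 0 T :=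
    absolutelyContinuousOnInterval_of_abs_sub_le_integral hT hp'.abs fun x y hx hxy hy =>
      abs_playFormula_sub_le hpb hr hx hxy hy fun u hu =>
        abs_sub_le_integral_abs_of_eq_integral hp' hp hx hu.1 hu.2 hy
  refine ⟨hξ.intervalIntegrable_deriv, fun t ht => ?_,
    fun t ht => abs_le.2 ⟨?_, ?_⟩, ?_, ?_⟩
  · have hξt := hξ.mono (uIcc_subset_uIcc left_mem_uIcc (mem_uIcc_of_le ht.1 ht.2))
    rw [hξt.integral_deriv_eq_sub]
    ring
  · linarith [playFormula_le_add (r := r) (x₀ := x₀) hpb ht]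
  · linarith [sub_le_playFormula (x₀ := x₀) hpb hr ht]
  · rw [← Measure.restrict_congr_set Ioo_ae_eq_Icc]
    filter_upwards [ae_restrict_mem measurableSet_Ioo,
      ae_restrict_of_ae hξ.ae_differentiableAt] with t ht hdiff z hz
    have hd := (hdiff (mem_uIcc_of_le ht.1.le ht.2.le)).hasDerivAt
    have hpt : ContinuousWithinAt p (Ici t) t :=
      (hpc.continuousAt (Icc_mem_nhds ht.1 ht.2)).continuousWithinAt
    exact mul_sub_nonneg_of_sign hz
      (fun h => hd.nonpos_of_eventually_le_right
        (eventually_playFormula_le hpb ⟨ht.1.le, ht.2⟩ hpt (by linarith)))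
      (fun h => hd.nonneg_of_eventually_ge_right
        (eventually_le_playFormula hpb ⟨ht.1.le, ht.2⟩ hpt (by linarith)))
  · have hclamp : max (-r) (min (p 0) r) ∈ Icc (-r) r :=
      ⟨le_max_left _ _, max_le (by linarith) (min_le_right _ _)⟩
    have h₀ : ξ 0 = x₀ := playFormula_zero (by linarith [hclamp.2]) (by linarith [hclamp.1])
    rw [h₀]
    ring

theorem IsPlay.eqOn {T r : ℝ} {p ξ ξ' η η' : ℝ → ℝ} (hξ : IsPlay T r p ξ ξ')
    (hη : IsPlay T r p η η') : EqOn ξ η (Icc 0 T) := by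
  obtain ⟨hξ'i, hξ_eq, hξ_bd, hξ_vi, hξ₀⟩ := hξ
  obtain ⟨hη'i, hη_eq, hη_bd, hη_vi, hη₀⟩ := hη
  set g := fun s => ξ' s - η' s
  have hg : ∀ s ∈ Icc 0 T, IntervalIntegrable g volume 0 s := fun s hs =>
    (hξ'i.sub hη'i).mono_set (uIcc_subset_uIcc left_mem_uIcc (mem_uIcc_of_le hs.1 hs.2))
  have hdiff : ∀ s ∈ Icc 0 T, ξ s - η s = ∫ u in (0:ℝ)..s, g u := fun s hs => by
    have hs' := uIcc_subset_uIcc left_mem_uIcc (mem_uIcc_of_le hs.1 hs.2)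
    rw [intervalIntegral.integral_sub (hξ'i.mono_set hs') (hη'i.mono_set hs')]
    linarith [hξ_eq s hs, hη_eq s hs, hξ₀, hη₀]
  intro t ht
  have hsub : Icc 0 t ⊆ Icc 0 T := Icc_subset_Icc le_rfl ht.2
  have hmono : ∀ᵐ s ∂volume.restrict (Icc 0 t), 0 ≤ -(g s * ∫ u in (0:ℝ)..s, g u) := by
    filter_upwards [ae_restrict_of_ae_restrict_of_subset hsub hξ_vi,
      ae_restrict_of_ae_restrict_of_subset hsub hη_vi, ae_restrict_mem measurableSet_Icc]
      with s hξs hηs hs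
    have h₁ := hξs (p s - η s) (abs_le.1 (hη_bd s (hsub hs)))
    have h₂ := hηs (p s - ξ s) (abs_le.1 (hξ_bd s (hsub hs)))
    rw [← hdiff s (hsub hs)]
    calc 0 ≤ ξ' s * (p s - ξ s - (p s - η s)) + η' s * (p s - η s - (p s - ξ s)) := by
          linarith
      _ = -(g s * (ξ s - η s)) := by ring
  have hsq : (ξ t - η t) ^ 2 ≤ 0 := by
    have := intervalIntegral.integral_nonneg_of_ae_restrict ht.1 hmono
    rw [intervalIntegral.integral_neg] at this
    rw [hdiff t ht, intervalIntegral.sq_integral_eq_two_mul_integral (hg t ht)]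
    linarith
  exact sub_eq_zero.1 (pow_eq_zero_iff two_ne_zero |>.1 (le_antisymm hsq (sq_nonneg _)))

/-- For each `r > 0` and each input `p ∈ W^{1,1}(0,T)`, there exists a solution
`ξ_r ∈ W^{1,1}(0,T)` of the play variational inequality, and it is unique
(as a function on `[0,T]`). -/
theorem play_exists_unique (T r : ℝ) (hT : 0 < T) (hr : 0 < r)
    (p p' : ℝ → ℝ) (hp' : IntervalIntegrable p' volume 0 T)
    (hp : ∀ t ∈ Set.Icc 0 T, p t = p 0 + ∫ s in (0:ℝ)..t, p' s) :
    ∃ ξ ξ' : ℝ → ℝ, IsPlay T r p ξ ξ' ∧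
      ∀ η η' : ℝ → ℝ, IsPlay T r p η η' → Set.EqOn ξ η (Set.Icc 0 T) := by
  have hplay := isPlay_playFormula hT.le hr.le hp' hp
  exact ⟨_, _, hplay, fun _ _ => hplay.eqOn⟩
end

section
/- For every p ∈ W^{1,1}(0,T) and every r > 0, the energy balance identity 𝔭_r[p]'(t) · p(t) − (1/2)(𝔭_r[p]²)'(t) = |r · 𝔭_r[p]'(t)| holds for almost every t ∈ (0,T). -/
open MeasureTheory Set

/-- Energy balance for the play: `𝔭_r[p]'(t)·p(t) − (1/2)(𝔭_r[p]²)'(t) = |r·𝔭_r[p]'(t)|`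
a.e. in `(0,T)` (here `(1/2)(ξ²)' = ξ ξ'` a.e.). -/
theorem play_energy_balance (T r : ℝ) (hT : 0 < T) (hr : 0 < r)
    (p p' ξ ξ' : ℝ → ℝ)
    (hp' : IntervalIntegrable p' volume 0 T)
    (hp : ∀ t ∈ Set.Icc 0 T, p t = p 0 + ∫ s in (0:ℝ)..t, p' s)
    (hξ : IsPlay T r p ξ ξ') :
    ∀ᵐ t ∂(volume.restrict (Set.Ioo 0 T)),
      ξ' t * p t - ξ t * ξ' t = |r * ξ' t| := by
  obtain ⟨-, -, hbd, hvi, -⟩ := hξ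
  have hvi' : ∀ᵐ t ∂(volume.restrict (Set.Ioo 0 T)),
      ∀ z ∈ Set.Icc (-r) r, 0 ≤ ξ' t * (p t - ξ t - z) :=
    ae_restrict_of_ae_restrict_of_subset Ioo_subset_Icc_self hvi
  have hmem : ∀ᵐ t ∂(volume.restrict (Set.Ioo 0 T)), t ∈ Set.Ioo 0 T :=
    ae_restrict_mem measurableSet_Ioo
  filter_upwards [hvi', hmem] with t hvt htm
  have hbd' : |p t - ξ t| ≤ r := hbd t (Ioo_subset_Icc_self htm)
  have h1 : 0 ≤ ξ' t * (p t - ξ t - r) := hvt r ⟨by linarith, le_rfl⟩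
  have h2 : 0 ≤ ξ' t * (p t - ξ t - (-r)) := hvt (-r) ⟨le_rfl, by linarith⟩
  have habs := abs_le.mp hbd'
  rcases lt_trichotomy (ξ' t) 0 with h | h | h
  · have : p t - ξ t ≤ -r := by nlinarith
    have hu : p t - ξ t = -r := le_antisymm this habs.1
    rw [abs_of_nonpos (by nlinarith : r * ξ' t ≤ 0)]
    nlinarith
  · simp [h]
  · have : r ≤ p t - ξ t := by nlinarith
    have hu : p t - ξ t = r := le_antisymm habs.2 this
    rw [abs_of_nonneg (by positivity : (0:ℝ) ≤ r * ξ' t)]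
    nlinarith
end

section
/- Gronwall-type bound for periodic solutions of differential inequalities: if y : ℝ → [0,∞) is absolutely continuous and 2π-periodic, β ∈ L¹_loc is 2π-periodic and nonnegative, and y'(t) + y(t) ≤ β(t) for a.e. t, then there is a constant C (depending only on the period, e.g. C = e^{2π}/(e^{2π}−1) + 1 works) such that y(t) ≤ C ∫_{2π}^{4π} (y(τ) + β(τ)) dτ for all t ∈ ℝ. -/
open MeasureTheory Set

/-- Gronwall-type bound for periodic solutions of `y' + y ≤ β`: if `y ≥ 0` is absolutely
continuous and `2π`-periodic, `β ≥ 0` is locally integrable and `2π`-periodic, and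
`y'(t) + y(t) ≤ β(t)` a.e., then there is a constant `C > 0` depending only on the period
such that `y(t) ≤ C ∫_{2π}^{4π} (y(τ) + β(τ)) dτ` for all `t`. -/
theorem periodic_gronwall :
    ∃ C : ℝ, 0 < C ∧
      ∀ y y' β : ℝ → ℝ,
        (∀ a b : ℝ, IntervalIntegrable y' volume a b) →
        (∀ a b : ℝ, y b = y a + ∫ s in a..b, y' s) →
        (∀ t, 0 ≤ y t) → (∀ t, y (t + 2 * Real.pi) = y t) →
        (∀ a b : ℝ, IntervalIntegrable β volume a b) →
        (∀ t, 0 ≤ β t) → (∀ t, β (t + 2 * Real.pi) = β t) →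
        (∀ᵐ t ∂(volume : Measure ℝ), y' t + y t ≤ β t) →
        ∀ t : ℝ, y t ≤ C * ∫ τ in (2 * Real.pi)..(4 * Real.pi), (y τ + β τ) := by
  have pi_pos := Real.pi_pos
  refine ⟨2 + 1 / (2 * Real.pi), by positivity, ?_⟩
  intro y y' β hy'int hFTC hy0 hyper hβint hβ0 hβper hae
  -- y is continuous
  have hycont : Continuous y := by
    have h1 : Continuous fun b => y 0 + ∫ s in (0:ℝ)..b, y' s :=
      continuous_const.add (intervalIntegral.continuous_primitive hy'int 0)
    exact h1.congr fun b => (hFTC 0 b).symm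
  have hyint : ∀ a b : ℝ, IntervalIntegrable y volume a b :=
    fun a b => hycont.intervalIntegrable a b
  have hyperiodic : Function.Periodic y (2 * Real.pi) := hyper
  have hβperiodic : Function.Periodic β (2 * Real.pi) := hβper
  -- minimum of y on [2π, 4π]
  obtain ⟨s₀, hs₀mem, hs₀min⟩ :=
    (isCompact_Icc (a := 2 * Real.pi) (b := 4 * Real.pi)).exists_isMinOn
      (Set.nonempty_Icc.2 (by linarith)) hycont.continuousOn
  have hIy : 2 * Real.pi * y s₀ ≤ ∫ τ in (2 * Real.pi)..(4 * Real.pi), y τ := by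
    have : ∫ _ in (2 * Real.pi)..(4 * Real.pi), y s₀ ≤
        ∫ τ in (2 * Real.pi)..(4 * Real.pi), y τ := by
      apply intervalIntegral.integral_mono_on (by linarith)
        (intervalIntegrable_const) (hyint _ _)
      intro x hx
      exact hs₀min hx
    have hconst : (∫ _ in (2 * Real.pi)..(4 * Real.pi), y s₀) = 2 * Real.pi * y s₀ := by
      rw [intervalIntegral.integral_const, smul_eq_mul]; ring
    linarith
  -- reduce t to t₀ ∈ [4π, 6π)
  intro t
  obtain ⟨t₀, ht₀mem, ht₀eq⟩ := hyperiodic.exists_mem_Ico (by linarith) t (4 * Real.pi)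
  obtain ⟨ht₀l, ht₀u⟩ := ht₀mem
  have ht₀u' : t₀ < 6 * Real.pi := by linarith
  have hs₀l : 2 * Real.pi ≤ s₀ := hs₀mem.1
  have hs₀u : s₀ ≤ 4 * Real.pi := hs₀mem.2
  -- y t₀ ≤ y s₀ + ∫_{s₀}^{t₀} β
  have hyβ : ∀ᵐ s ∂(volume : Measure ℝ), y' s ≤ β s := by
    filter_upwards [hae] with s hs
    linarith [hy0 s]
  have key : y t₀ ≤ y s₀ + ∫ s in s₀..t₀, β s := by
    have h1 := hFTC s₀ t₀
    have h2 : ∫ s in s₀..t₀, y' s ≤ ∫ s in s₀..t₀, β s :=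
      intervalIntegral.integral_mono_ae (by linarith) (hy'int _ _) (hβint _ _) hyβ
    linarith
  -- ∫_{s₀}^{t₀} β ≤ ∫_{2π}^{6π} β = 2 ∫_{2π}^{4π} β
  have hβnn : ∀ a b : ℝ, a ≤ b → 0 ≤ ∫ s in a..b, β s :=
    fun a b hab => intervalIntegral.integral_nonneg hab (fun u _ => hβ0 u)
  have hsplit : ∫ s in (2 * Real.pi)..(6 * Real.pi), β s =
      (∫ s in (2 * Real.pi)..s₀, β s) + (∫ s in s₀..t₀, β s) + (∫ s in t₀..(6 * Real.pi), β s) := by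
    rw [intervalIntegral.integral_add_adjacent_intervals (hβint _ _) (hβint _ _),
      intervalIntegral.integral_add_adjacent_intervals (hβint _ _) (hβint _ _)]
  have hβle : ∫ s in s₀..t₀, β s ≤ ∫ s in (2 * Real.pi)..(6 * Real.pi), β s := by
    have := hβnn (2 * Real.pi) s₀ hs₀l
    have := hβnn t₀ (6 * Real.pi) (le_of_lt ht₀u')
    linarith [hsplit]
  have hβper2 : ∫ s in (2 * Real.pi)..(6 * Real.pi), β s =
      2 * ∫ s in (2 * Real.pi)..(4 * Real.pi), β s := by
    have h46 : ∫ s in (4 * Real.pi)..(6 * Real.pi), β s =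
        ∫ s in (2 * Real.pi)..(4 * Real.pi), β s := by
      have := hβperiodic.intervalIntegral_add_eq (4 * Real.pi) (2 * Real.pi)
      convert this using 2 <;> ring
    rw [← intervalIntegral.integral_add_adjacent_intervals (a := 2 * Real.pi)
      (b := 4 * Real.pi) (c := 6 * Real.pi) (hβint _ _) (hβint _ _), h46]
    ring
  -- combine
  have hsum : ∫ τ in (2 * Real.pi)..(4 * Real.pi), (y τ + β τ) =
      (∫ τ in (2 * Real.pi)..(4 * Real.pi), y τ) + ∫ τ in (2 * Real.pi)..(4 * Real.pi), β τ :=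
    intervalIntegral.integral_add (hyint _ _) (hβint _ _)
  have hynn : 0 ≤ ∫ τ in (2 * Real.pi)..(4 * Real.pi), y τ :=
    intervalIntegral.integral_nonneg (by linarith) (fun u _ => hy0 u)
  have hβnn' : 0 ≤ ∫ τ in (2 * Real.pi)..(4 * Real.pi), β τ := hβnn _ _ (by linarith)
  have hys₀ : y s₀ ≤ (1 / (2 * Real.pi)) * ∫ τ in (2 * Real.pi)..(4 * Real.pi), y τ := by
    rw [div_mul_eq_mul_div, le_div_iff₀ (by positivity)]
    linarith
  rw [ht₀eq, hsum]
  have h1 : 0 ≤ 1 / (2 * Real.pi) * ∫ τ in (2 * Real.pi)..(4 * Real.pi), β τ :=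
    mul_nonneg (by positivity) hβnn'
  linarith [key, hβle, hβper2, hys₀, hynn, hβnn', h1]
end
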